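/- Let K ≥ 1, let r_1 < r_2 < ... < r_K be positive reals and b_1, ..., b_K positive reals with b_1 + ... + b_K = K and b_n < K for all n. Define ã_K = (2^{b_K r_K} - 1)/(2^{K r_K} - 1) and for n < K, ã_n = (2^{b_n r_n} - 1)/(2^{K r_n} - 1) + ((2^{b_n r_n} - 1)/2^{b_n r_n}) · ∑_{l=n+1}^K [(2^{b_l r_l} - 1)/(2^{K r_l} - 1)] · ∏_{k=n}^{l-1} 2^{b_k r_k}. Then ∑_{n=1}^K ã_n < 1 whenever K ≥ 2. -/

import Mathlib

/-!
Write `c n = 2 ^ (b n * r n)` and `q n = (2 ^ (b n * r n) - 1) / (2 ^ (K * r n) - 1)`. The sum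
`W m = ∑_{m ≤ l ≤ K} q l * ∏_{m ≤ k < l} c k` solves `W m = q m + c m * W (m + 1)`, `W (K + 1) = 0`,
and `ã n = q n + (c n - 1) * W (n + 1) = W n - W (n + 1)`, so `∑ ã n` telescopes to `W 1`.

Going down from `m = K`, `W m` is bounded by `(2 ^ (T m * r m) - 1) / (2 ^ (K * r m) - 1)`, where
`T m = b m + ⋯ + b K`: the recursion turns the bound at `m + 1` into the bound at `m` with `r (m + 1)`
replaced by `r m`, and `x ↦ (2 ^ (T * x) - 1) / (2 ^ (K * x) - 1)` is strictly decreasing for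
`0 < T < K` by strict concavity of `u ↦ u ^ (T / K)`. Since `r m < r (m + 1)` each step is strict,
and at `m = 1` the bound is `1` because `T 1 = K`.
-/

open Finset

lemma Real.rpow_sub_one_div_sub_one_strictAntiOn {θ : ℝ} (hθ₀ : 0 < θ) (hθ₁ : θ < 1) :
    StrictAntiOn (fun u : ℝ ↦ (u ^ θ - 1) / (u - 1)) (Set.Ioi 1) := by
  intro u hu v hv huv
  have hu' : (1 : ℝ) < u := hu
  have hv' : (1 : ℝ) < v := hv
  simpa only [Real.one_rpow] using (Real.strictConcaveOn_rpow hθ₀ hθ₁).secant_strict_mono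
    (a := 1) (by simp) (by simp; linarith) (by simp; linarith) hu'.ne' hv'.ne' huv

noncomputable def powerRatio (K T x : ℝ) : ℝ := (2 ^ (T * x) - 1) / (2 ^ (K * x) - 1)

lemma powerRatio_add (K b T x : ℝ) :
    powerRatio K b x + 2 ^ (b * x) * powerRatio K T x = powerRatio K (b + T) x := by
  rw [powerRatio, powerRatio, powerRatio, add_mul, Real.rpow_add two_pos]
  ring

lemma powerRatio_self {K x : ℝ} (hK : 0 < K) (hx : 0 < x) : powerRatio K K x = 1 :=
  div_self (sub_ne_zero.2 (Real.one_lt_rpow one_lt_two (mul_pos hK hx)).ne')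

lemma powerRatio_eq_rpow_div {K : ℝ} (hK : K ≠ 0) (T x : ℝ) :
    powerRatio K T x = ((2 ^ (K * x)) ^ (T / K) - 1) / (2 ^ (K * x) - 1) := by
  rw [powerRatio, ← Real.rpow_mul zero_le_two, mul_comm K x, mul_assoc, mul_div_cancel₀ _ hK,
    mul_comm]

lemma powerRatio_strictAntiOn {K T : ℝ} (hT : 0 < T) (hTK : T < K) :
    StrictAntiOn (powerRatio K T) (Set.Ioi 0) := by
  have hK : 0 < K := hT.trans hTK
  intro x hx y hy hxy
  simp only [powerRatio_eq_rpow_div hK.ne']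
  exact Real.rpow_sub_one_div_sub_one_strictAntiOn (div_pos hT hK) ((div_lt_one hK).2 hTK)
    (Real.one_lt_rpow one_lt_two (mul_pos hK hx)) (Real.one_lt_rpow one_lt_two (mul_pos hK hy))
    ((Real.rpow_lt_rpow_left_iff one_lt_two).2 (mul_lt_mul_of_pos_left hxy hK))

section TailSum

variable (c q : ℕ → ℝ)

def tailSum (m N : ℕ) : ℝ := ∑ l ∈ Ico m N, q l * ∏ k ∈ Ico m l, c k

lemma sum_Ico_succ_mul_prod_Ico (m N : ℕ) :
    ∑ l ∈ Ico (m + 1) N, q l * ∏ k ∈ Ico m l, c k = c m * tailSum c q (m + 1) N := by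
  rw [tailSum, mul_sum]
  refine sum_congr rfl fun l hl ↦ ?_
  rw [prod_eq_prod_Ico_succ_bot (by simp at hl; omega)]
  ring

lemma sum_Icc_succ_mul_prod_Icc_sub_one (m K : ℕ) :
    ∑ l ∈ Icc (m + 1) K, q l * ∏ k ∈ Icc m (l - 1), c k = c m * tailSum c q (m + 1) (K + 1) := by
  rw [← sum_Ico_succ_mul_prod_Ico, ← Ico_add_one_right_eq_Icc]
  refine sum_congr rfl fun l hl ↦ ?_
  rw [← Ico_add_one_right_eq_Icc, Nat.sub_add_cancel (by simp at hl; omega)]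

lemma tailSum_self (N : ℕ) : tailSum c q N N = 0 := by
  simp [tailSum]

lemma tailSum_of_lt {m N : ℕ} (h : m < N) :
    tailSum c q m N = q m + c m * tailSum c q (m + 1) N := by
  rw [tailSum, sum_eq_sum_Ico_succ_bot h, Ico_self, prod_empty, mul_one,
    sum_Ico_succ_mul_prod_Ico]

lemma sum_Ico_add_sub_one_mul_tailSum {m N : ℕ} (h : m ≤ N) :
    ∑ n ∈ Ico m N, (q n + (c n - 1) * tailSum c q (n + 1) N) = tailSum c q m N := by
  have hterm : ∀ n ∈ Ico m N, q n + (c n - 1) * tailSum c q (n + 1) N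
      = -(tailSum c q (n + 1) N - tailSum c q n N) := fun n hn ↦ by
    rw [tailSum_of_lt c q (mem_Ico.1 hn).2]
    ring
  rw [sum_congr rfl hterm, sum_neg_distrib, sum_Ico_sub (fun n ↦ tailSum c q n N) h, tailSum_self]
  ring

end TailSum

section PowerTailSum

variable {K : ℝ} {r b : ℕ → ℝ}

lemma tailSum_lt_powerRatio_of_succ {m N : ℕ} (hmN : m + 1 < N) (hrm : 0 < r m)
    (hr : r m < r (m + 1)) (hb : ∀ n ∈ Ico m N, 0 < b n) (hT : ∑ k ∈ Ico m N, b k ≤ K)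
    (ih : ∑ k ∈ Ico (m + 1) N, b k ≤ K →
      tailSum (fun k ↦ 2 ^ (b k * r k)) (fun k ↦ powerRatio K (b k) (r k)) (m + 1) N ≤
        powerRatio K (∑ k ∈ Ico (m + 1) N, b k) (r (m + 1))) :
    tailSum (fun k ↦ 2 ^ (b k * r k)) (fun k ↦ powerRatio K (b k) (r k)) m N <
      powerRatio K (∑ k ∈ Ico m N, b k) (r m) := by
  have hsplit := sum_eq_sum_Ico_succ_bot (by omega : m < N) b
  have hbm : 0 < b m := hb m (by simp; omega)
  have hT₀ : 0 < ∑ k ∈ Ico (m + 1) N, b k :=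
    sum_pos (fun n hn ↦ hb n (by simp at hn ⊢; omega)) (nonempty_Ico.2 hmN)
  have hTK : ∑ k ∈ Ico (m + 1) N, b k < K := by linarith
  rw [tailSum_of_lt _ _ (by omega : m < N), hsplit, ← powerRatio_add]
  gcongr
  exact (ih hTK.le).trans_lt (powerRatio_strictAntiOn hT₀ hTK hrm (hrm.trans hr) hr)

lemma tailSum_le_powerRatio {m₀ m N : ℕ} (hr : ∀ n ∈ Ico m₀ N, 0 < r n)
    (hrmono : StrictMonoOn r (Ico m₀ N)) (hb : ∀ n ∈ Ico m₀ N, 0 < b n) (hm₀ : m₀ ≤ m)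
    (hmN : m < N) (hT : ∑ k ∈ Ico m N, b k ≤ K) :
    tailSum (fun k ↦ 2 ^ (b k * r k)) (fun k ↦ powerRatio K (b k) (r k)) m N ≤
      powerRatio K (∑ k ∈ Ico m N, b k) (r m) := by
  refine Nat.decreasingInduction' (P := fun j ↦ j < N → ∑ i ∈ Ico j N, b i ≤ K →
      tailSum (fun k ↦ 2 ^ (b k * r k)) (fun k ↦ powerRatio K (b k) (r k)) j N ≤
        powerRatio K (∑ i ∈ Ico j N, b i) (r j)) ?_ hmN.le (fun h ↦ absurd h (lt_irrefl N)) hmN hT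
  intro k hkN hmk ih _ hTk
  rcases (Nat.succ_le_of_lt hkN).eq_or_lt with rfl | hkN'
  · simp [tailSum_of_lt _ _ hkN, tailSum_self]
  · have hk : k ∈ Ico m₀ N := by simp; omega
    have hk' : k + 1 ∈ Ico m₀ N := by simp; omega
    exact (tailSum_lt_powerRatio_of_succ hkN' (hr k hk)
      (hrmono hk hk' (Nat.lt_succ_self k)) (fun n hn ↦ hb n (by simp at hn ⊢; omega)) hTk
      (ih hkN')).le

lemma tailSum_lt_powerRatio {m N : ℕ} (hmN : m + 1 < N) (hr : ∀ n ∈ Ico m N, 0 < r n)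
    (hrmono : StrictMonoOn r (Ico m N)) (hb : ∀ n ∈ Ico m N, 0 < b n)
    (hT : ∑ k ∈ Ico m N, b k ≤ K) :
    tailSum (fun k ↦ 2 ^ (b k * r k)) (fun k ↦ powerRatio K (b k) (r k)) m N <
      powerRatio K (∑ k ∈ Ico m N, b k) (r m) := by
  have hm : m ∈ Ico m N := by simp; omega
  have hm' : m + 1 ∈ Ico m N := by simp; omega
  exact tailSum_lt_powerRatio_of_succ hmN (hr m hm) (hrmono hm hm' (Nat.lt_succ_self m)) hb hT
    (tailSum_le_powerRatio hr hrmono hb m.le_succ hmN)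

end PowerTailSum

theorem stmt_7 (K : ℕ) (hK : 2 ≤ K) (r b : ℕ → ℝ)
    (hr : ∀ n ∈ Finset.Icc 1 K, 0 < r n)
    (hrmono : ∀ m ∈ Finset.Icc 1 K, ∀ n ∈ Finset.Icc 1 K, m < n → r m < r n)
    (hb : ∀ n ∈ Finset.Icc 1 K, 0 < b n)
    (hbsum : ∑ n ∈ Finset.Icc 1 K, b n = (K : ℝ))
    (atil : ℕ → ℝ)
    (hatilK : atil K = ((2 : ℝ) ^ (b K * r K) - 1) / ((2 : ℝ) ^ ((K : ℝ) * r K) - 1))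
    (hatil : ∀ n : ℕ, 1 ≤ n → n < K →
      atil n = ((2 : ℝ) ^ (b n * r n) - 1) / ((2 : ℝ) ^ ((K : ℝ) * r n) - 1) +
        (((2 : ℝ) ^ (b n * r n) - 1) / (2 : ℝ) ^ (b n * r n)) *
          ∑ l ∈ Finset.Icc (n + 1) K,
            (((2 : ℝ) ^ (b l * r l) - 1) / ((2 : ℝ) ^ ((K : ℝ) * r l) - 1)) *
              ∏ k ∈ Finset.Icc n (l - 1), (2 : ℝ) ^ (b k * r k)) :
    ∑ n ∈ Finset.Icc 1 K, atil n < 1 := by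
  let c : ℕ → ℝ := fun k ↦ 2 ^ (b k * r k)
  let q : ℕ → ℝ := fun k ↦ powerRatio K (b k) (r k)
  have hatil' : ∀ n ∈ Ico 1 (K + 1), atil n = q n + (c n - 1) * tailSum c q (n + 1) (K + 1) := by
    intro n hn
    obtain ⟨hn₁, hnK⟩ := mem_Ico.1 hn
    rcases (Nat.lt_succ_iff.1 hnK).eq_or_lt with rfl | hnK
    · rw [hatilK, tailSum_self, mul_zero, add_zero]
      rfl
    · rw [hatil n hn₁ hnK]
      change q n + (c n - 1) / c n * ∑ l ∈ Icc (n + 1) K, q l * ∏ k ∈ Icc n (l - 1), c k = _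
      have hc : c n ≠ 0 := (Real.rpow_pos_of_pos two_pos _).ne'
      rw [sum_Icc_succ_mul_prod_Icc_sub_one]
      field_simp
  rw [← Ico_add_one_right_eq_Icc] at hr hrmono hb hbsum ⊢
  calc ∑ n ∈ Ico 1 (K + 1), atil n = tailSum c q 1 (K + 1) := by
        rw [sum_congr rfl hatil', sum_Ico_add_sub_one_mul_tailSum c q (by omega)]
    _ < powerRatio K (∑ k ∈ Ico 1 (K + 1), b k) (r 1) :=
        tailSum_lt_powerRatio (by omega) hr hrmono hb hbsum.le
    _ = 1 := by
        rw [hbsum]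
        exact powerRatio_self (by positivity) (hr 1 (by simp; omega))
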